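/- Let T > 0, a > 0, let σ : [0,T] → ℝ be right-continuous with left limits, with at most finitely many discontinuity points and σ̲ ≤ σ(u) ≤ σ̄ for constants 0 < σ̲ ≤ σ̄, and let α : [0,T] → ℝ be continuous with α(u) > 0 for all u. For each integer B ≥ 1, with Δ_B = T/B, 𝖳_i = i·T/B, Q_i = ∫_{𝖳_{i−1}}^{𝖳_i} σ(u)⁴ du, σ̄_i = (Δ_B^{−1}·∫_{𝖳_{i−1}}^{𝖳_i} σ(u)² du)^{1/2} and R_i = (∫₀^T α(s)^{−1} ds)/(∫_{𝖳_{i−1}}^{𝖳_i} α(s)^{−1} ds), define AVAR_B^{(QMLE,rob)} = Σ_{i=1}^B R_i^{1/2} · [ 5·a·Δ_B^{1/2}·Q_i/σ̄_i + 3·a·σ̄_i³·Δ_B^{3/2} ]. Then AVAR_B^{(QMLE,rob)} → 8·a·(∫₀^T α(s)^{−1} ds)^{1/2} · ∫₀^T α(s)^{1/2}·σ(s)³ ds as B → ∞. -/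

import Mathlib

open MeasureTheory Filter

namespace Stmt14Aux

noncomputable def Hfun (x y z : ℝ) : ℝ :=
  (5 * y / x ^ ((1:ℝ)/2) + 3 * x ^ ((3:ℝ)/2)) / z ^ ((1:ℝ)/2)

lemma Hfun_nonneg {x y z : ℝ} (hx : 0 ≤ x) (hy : 0 ≤ y) (hz : 0 ≤ z) :
    0 ≤ Hfun x y z := by
  unfold Hfun; positivity

lemma Hfun_le {x y z x0 x1 y1 z0 : ℝ} (hx0 : 0 < x0) (hz0 : 0 < z0)
    (hx : x0 ≤ x) (hx1 : x ≤ x1) (hy0 : 0 ≤ y) (hy1 : y ≤ y1) (hz : z0 ≤ z) :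
    Hfun x y z ≤ (5 * y1 / x0 ^ ((1:ℝ)/2) + 3 * x1 ^ ((3:ℝ)/2)) / z0 ^ ((1:ℝ)/2) := by
  have hxpos : 0 < x := hx0.trans_le hx
  have h1 : (0:ℝ) < x0 ^ ((1:ℝ)/2) := Real.rpow_pos_of_pos hx0 _
  have h2 : (0:ℝ) < z0 ^ ((1:ℝ)/2) := Real.rpow_pos_of_pos hz0 _
  have h3 : x0 ^ ((1:ℝ)/2) ≤ x ^ ((1:ℝ)/2) := Real.rpow_le_rpow hx0.le hx (by norm_num)
  have h4 : x ^ ((3:ℝ)/2) ≤ x1 ^ ((3:ℝ)/2) := Real.rpow_le_rpow hxpos.le hx1 (by norm_num)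
  have h5 : z0 ^ ((1:ℝ)/2) ≤ z ^ ((1:ℝ)/2) := Real.rpow_le_rpow hz0.le hz (by norm_num)
  unfold Hfun
  have hnum : 5 * y / x ^ ((1:ℝ)/2) + 3 * x ^ ((3:ℝ)/2)
      ≤ 5 * y1 / x0 ^ ((1:ℝ)/2) + 3 * x1 ^ ((3:ℝ)/2) := by
    have ht1 : 5 * y / x ^ ((1:ℝ)/2) ≤ 5 * y1 / x0 ^ ((1:ℝ)/2) :=
      div_le_div₀ (by linarith) (by linarith) h1 h3
    linarith
  have hnum0 : 0 ≤ 5 * y / x ^ ((1:ℝ)/2) + 3 * x ^ ((3:ℝ)/2) := by positivity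
  exact div_le_div₀ (by linarith [hnum0]) hnum h2 h5

lemma avgBounds {f : ℝ → ℝ} {lo hi c d : ℝ} (hcd : c < d)
    (hmeas : AEStronglyMeasurable f (volume.restrict (Set.Ioc c d)))
    (hlo : ∀ u ∈ Set.Ioc c d, lo ≤ f u) (hhi : ∀ u ∈ Set.Ioc c d, f u ≤ hi) :
    IntervalIntegrable f volume c d ∧
      lo * (d - c) ≤ (∫ u in c..d, f u) ∧ (∫ u in c..d, f u) ≤ hi * (d - c) := by
  have hvol : volume (Set.Ioc c d) < ⊤ := measure_Ioc_lt_top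
  have hK : IntegrableOn (fun _ : ℝ => max |lo| |hi|) (Set.Ioc c d) volume :=
    integrableOn_const hvol.ne
  have hint : IntegrableOn f (Set.Ioc c d) volume := by
    refine hK.mono' hmeas ?_
    refine (ae_restrict_iff' measurableSet_Ioc).2 (Filter.Eventually.of_forall ?_)
    intro u hu
    have h1 := hlo u hu; have h2 := hhi u hu
    rw [Real.norm_eq_abs, abs_le]
    constructor
    · linarith [neg_abs_le lo, le_max_left |lo| |hi|]
    · exact h2.trans ((le_abs_self hi).trans (le_max_right _ _))
  have hII : IntervalIntegrable f volume c d :=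
    (intervalIntegrable_iff_integrableOn_Ioc_of_le hcd.le).2 hint
  have hcc : IntegrableOn (fun _ : ℝ => lo) (Set.Ioc c d) volume := integrableOn_const hvol.ne
  have hcc' : IntegrableOn (fun _ : ℝ => hi) (Set.Ioc c d) volume := integrableOn_const hvol.ne
  refine ⟨hII, ?_, ?_⟩
  · rw [intervalIntegral.integral_of_le hcd.le]
    calc lo * (d - c) = ∫ _ in Set.Ioc c d, lo := by
          rw [setIntegral_const, Real.volume_real_Ioc_of_le hcd.le,
            smul_eq_mul, mul_comm]
      _ ≤ ∫ u in Set.Ioc c d, f u :=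
          setIntegral_mono_on hcc hint measurableSet_Ioc hlo
  · rw [intervalIntegral.integral_of_le hcd.le]
    calc (∫ u in Set.Ioc c d, f u) ≤ ∫ _ in Set.Ioc c d, hi :=
          setIntegral_mono_on hint hcc' measurableSet_Ioc hhi
      _ = hi * (d - c) := by
          rw [setIntegral_const, Real.volume_real_Ioc_of_le hcd.le,
            smul_eq_mul, mul_comm]

lemma inv_mul_mem {Δ S lo hi : ℝ} (hΔ : 0 < Δ) (h1 : lo * Δ ≤ S) (h2 : S ≤ hi * Δ) :
    lo ≤ Δ⁻¹ * S ∧ Δ⁻¹ * S ≤ hi := by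
  constructor
  · have := mul_le_mul_of_nonneg_left h1 (inv_pos.2 hΔ).le
    rwa [show Δ⁻¹ * (lo * Δ) = lo by field_simp] at this
  · have := mul_le_mul_of_nonneg_left h2 (inv_pos.2 hΔ).le
    rwa [show Δ⁻¹ * (hi * Δ) = hi by field_simp] at this

lemma summand_eq {A Δ S2 S4 G a : ℝ} (hA : 0 < A) (hΔ : 0 < Δ) (hS2 : 0 < S2)
    (hS4 : 0 ≤ S4) (hG : 0 < G) :
    (A / G) ^ ((1:ℝ)/2) *
      (5 * a * Δ ^ ((1:ℝ)/2) * S4 / (Δ⁻¹ * S2) ^ ((1:ℝ)/2)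
        + 3 * a * (Δ⁻¹ * S2) ^ ((3:ℝ)/2) * Δ ^ ((3:ℝ)/2)) =
    a * A ^ ((1:ℝ)/2) * (Δ * Hfun (Δ⁻¹ * S2) (Δ⁻¹ * S4) (Δ⁻¹ * G)) := by
  have r1 : (Δ⁻¹ * S2) ^ ((1:ℝ)/2) = (Δ ^ ((1:ℝ)/2))⁻¹ * S2 ^ ((1:ℝ)/2) := by
    rw [Real.mul_rpow (by positivity) hS2.le, Real.inv_rpow hΔ.le]
  have r2 : (Δ⁻¹ * S2) ^ ((3:ℝ)/2) = (Δ ^ ((3:ℝ)/2))⁻¹ * S2 ^ ((3:ℝ)/2) := by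
    rw [Real.mul_rpow (by positivity) hS2.le, Real.inv_rpow hΔ.le]
  have r3 : (Δ⁻¹ * G) ^ ((1:ℝ)/2) = (Δ ^ ((1:ℝ)/2))⁻¹ * G ^ ((1:ℝ)/2) := by
    rw [Real.mul_rpow (by positivity) hG.le, Real.inv_rpow hΔ.le]
  have r4 : (A / G) ^ ((1:ℝ)/2) = A ^ ((1:ℝ)/2) / G ^ ((1:ℝ)/2) :=
    Real.div_rpow hA.le hG.le _
  have r5 : Δ ^ ((3:ℝ)/2) = Δ * Δ ^ ((1:ℝ)/2) := by
    rw [show (3:ℝ)/2 = 1 + 1/2 by norm_num, Real.rpow_add hΔ, Real.rpow_one]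
  have r6 : S2 ^ ((3:ℝ)/2) = S2 * S2 ^ ((1:ℝ)/2) := by
    rw [show (3:ℝ)/2 = 1 + 1/2 by norm_num, Real.rpow_add hS2, Real.rpow_one]
  have h1 : (Δ:ℝ) ^ ((1:ℝ)/2) ≠ 0 := (Real.rpow_pos_of_pos hΔ _).ne'
  have h2 : S2 ^ ((1:ℝ)/2) ≠ 0 := (Real.rpow_pos_of_pos hS2 _).ne'
  have h3 : G ^ ((1:ℝ)/2) ≠ 0 := (Real.rpow_pos_of_pos hG _).ne'
  unfold Hfun
  rw [r4, r1, r2, r3, r5, r6]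
  field_simp


lemma tendsto_avg {f : ℝ → ℝ} {T u : ℝ} (hT : 0 < T) (hu0 : 0 < u) (huT : u < T)
    (hint : ∀ c d : ℝ, 0 ≤ c → d ≤ T → c ≤ d → IntervalIntegrable f volume c d)
    (hcont : ContinuousWithinAt f (Set.Icc 0 T) u) :
    Tendsto (fun B : ℕ => (T / (B:ℝ))⁻¹ *
        ∫ v in ((⌊u * (B:ℝ) / T⌋₊ : ℝ) * T / (B:ℝ))..(((⌊u * (B:ℝ) / T⌋₊ : ℝ) + 1) * T / (B:ℝ)), f v)
      atTop (nhds (f u)) := by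
  rw [Metric.tendsto_atTop]
  intro ε hε
  obtain ⟨δ, hδ0, hδ⟩ := Metric.continuousWithinAt_iff.1 hcont (ε/2) (half_pos hε)
  obtain ⟨N0, hN0⟩ := exists_nat_gt (T / δ)
  refine ⟨max N0 1, fun B hB => ?_⟩
  have hB1 : 1 ≤ B := le_trans (le_max_right _ _) hB
  have hBpos : (0:ℝ) < B := by exact_mod_cast hB1
  have hBN0 : T / δ < (B:ℝ) := lt_of_lt_of_le hN0 (by exact_mod_cast le_trans (le_max_left _ _) hB)
  have hΔpos : 0 < T / (B:ℝ) := div_pos hT hBpos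
  have hΔδ : T / (B:ℝ) < δ := by
    rw [div_lt_iff₀ hBpos]
    rw [div_lt_iff₀ hδ0] at hBN0
    linarith
  set i := ⌊u * (B:ℝ) / T⌋₊ with hidef
  set c := (i:ℝ) * T / (B:ℝ) with hcdef
  set d := ((i:ℝ) + 1) * T / (B:ℝ) with hddef
  have hfl1 : (i:ℝ) ≤ u * (B:ℝ) / T := Nat.floor_le (by positivity)
  have hfl2 : u * (B:ℝ) / T < (i:ℝ) + 1 := Nat.lt_floor_add_one _
  have hcu : c ≤ u := by
    rw [le_div_iff₀ hT] at hfl1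
    rw [hcdef, div_le_iff₀ hBpos]
    linarith
  have hud : u < d := by
    rw [div_lt_iff₀ hT] at hfl2
    rw [hddef, lt_div_iff₀ hBpos]
    linarith
  have hc0 : 0 ≤ c := by positivity
  have hdT : d ≤ T := by
    have hiB : (i:ℝ) + 1 ≤ (B:ℝ) := by
      have h1 : (i:ℝ) < (B:ℝ) := by
        calc (i:ℝ) ≤ u * B / T := hfl1
          _ < B := by rw [div_lt_iff₀ hT]; nlinarith
      have h2 : i < B := by exact_mod_cast h1
      exact_mod_cast Nat.succ_le_of_lt h2
    rw [hddef, div_le_iff₀ hBpos]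
    nlinarith
  have hcd : c < d := lt_of_le_of_lt hcu hud
  have hdc : d - c = T / (B:ℝ) := by rw [hcdef, hddef]; ring
  have hII := hint c d hc0 hdT hcd.le
  have hsplit : (∫ v in c..d, f v) - (d - c) * f u = ∫ v in c..d, (f v - f u) := by
    rw [intervalIntegral.integral_sub hII (intervalIntegrable_const)]
    rw [intervalIntegral.integral_const, smul_eq_mul]
  have hbound : ‖∫ v in c..d, (f v - f u)‖ ≤ (ε/2) * |d - c| := by
    apply intervalIntegral.norm_integral_le_of_norm_le_const
    intro v hv
    rw [Set.uIoc_of_le hcd.le] at hv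
    have hvI : v ∈ Set.Icc 0 T := ⟨le_trans hc0 hv.1.le, hv.2.trans hdT⟩
    have hdist : dist v u < δ := by
      rw [Real.dist_eq, abs_lt]
      constructor
      · have h1 : u - v < d - c := by linarith [hv.1, hud]
        rw [hdc] at h1; linarith
      · have h1 : v - u ≤ d - c := by linarith [hv.2, hcu]
        rw [hdc] at h1; linarith
    have h2 := hδ hvI hdist
    rw [Real.dist_eq] at h2
    rw [Real.norm_eq_abs]
    exact le_of_lt h2
  rw [Real.dist_eq]
  have heq1 : (T / (B:ℝ))⁻¹ * (∫ v in c..d, f v) - f u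
      = (T / (B:ℝ))⁻¹ * ((∫ v in c..d, f v) - (d - c) * f u) := by
    rw [hdc, mul_sub, inv_mul_cancel_left₀ hΔpos.ne']
  rw [heq1, hsplit, abs_mul, abs_of_pos (inv_pos.2 hΔpos)]
  rw [Real.norm_eq_abs] at hbound
  have habs : |d - c| = T / (B:ℝ) := by rw [hdc]; exact abs_of_pos hΔpos
  rw [habs] at hbound
  calc (T / (B:ℝ))⁻¹ * |∫ v in c..d, (f v - f u)|
      ≤ (T / (B:ℝ))⁻¹ * ((ε/2) * (T / (B:ℝ))) :=
        mul_le_mul_of_nonneg_left hbound (inv_pos.2 hΔpos).le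
    _ = ε/2 := by field_simp
    _ < ε := half_lt_self hε


noncomputable def mval (T : ℝ) (f : ℝ → ℝ) (B i : ℕ) : ℝ :=
  (T / (B:ℝ))⁻¹ * ∫ u in ((i:ℝ) * T / (B:ℝ))..(((i:ℝ) + 1) * T / (B:ℝ)), f u

noncomputable def Fb (T : ℝ) (σ α : ℝ → ℝ) (B : ℕ) (u : ℝ) : ℝ :=
  Hfun (mval T (fun v => σ v ^ 2) B ⌊u * (B:ℝ) / T⌋₊)
       (mval T (fun v => σ v ^ 4) B ⌊u * (B:ℝ) / T⌋₊)
       (mval T (fun v => (α v)⁻¹) B ⌊u * (B:ℝ) / T⌋₊)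

lemma measurable_Fb (T : ℝ) (σ α : ℝ → ℝ) (B : ℕ) : Measurable (Fb T σ α B) := by
  have hfloor : Measurable fun u : ℝ => ⌊u * (B:ℝ) / T⌋₊ :=
    Nat.measurable_floor.comp ((measurable_id.mul_const _).div_const _)
  exact (measurable_from_nat
    (f := fun k : ℕ => Hfun (mval T (fun v => σ v ^ 2) B k)
      (mval T (fun v => σ v ^ 4) B k) (mval T (fun v => (α v)⁻¹) B k))).comp hfloor

lemma blockFacts {T : ℝ} (hT : 0 < T) {B i : ℕ} (hB : 1 ≤ B) (hi : i < B) :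
    0 ≤ (i:ℝ) * T / B ∧ (i:ℝ) * T / B < ((i:ℝ)+1) * T / B ∧ ((i:ℝ)+1) * T / B ≤ T ∧
      ((i:ℝ)+1) * T / B - (i:ℝ) * T / B = T / B := by
  have hBpos : (0:ℝ) < B := by exact_mod_cast hB
  have hiB : (i:ℝ) + 1 ≤ B := by exact_mod_cast Nat.succ_le_of_lt hi
  refine ⟨by positivity, ?_, ?_, by ring⟩
  · rw [div_lt_div_iff₀ hBpos hBpos]; nlinarith
  · rw [div_le_iff₀ hBpos]; nlinarith

lemma floor_on_block {T x : ℝ} (hT : 0 < T) {B i : ℕ} (hB : 1 ≤ B)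
    (hx0 : 0 ≤ (i:ℝ) * T / B)
    (hx1 : (i:ℝ) * T / B < x) (hx2 : x < ((i:ℝ)+1) * T / B) :
    ⌊x * (B:ℝ) / T⌋₊ = i := by
  have hBpos : (0:ℝ) < B := by exact_mod_cast hB
  have hxpos : 0 < x := lt_of_le_of_lt hx0 hx1
  rw [Nat.floor_eq_iff (by positivity)]
  constructor
  · rw [le_div_iff₀ hT]
    rw [div_lt_iff₀ hBpos] at hx1
    linarith
  · rw [div_lt_iff₀ hT]
    rw [lt_div_iff₀ hBpos] at hx2
    linarith

lemma Fb_block_integral {T : ℝ} (hT : 0 < T) (σ α : ℝ → ℝ) {B i : ℕ} (hB : 1 ≤ B)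
    (hi : i < B) :
    IntervalIntegrable (Fb T σ α B) volume ((i:ℝ) * T / B) (((i:ℝ)+1) * T / B) ∧
      (∫ x in ((i:ℝ) * T / B)..(((i:ℝ)+1) * T / B), Fb T σ α B x)
        = (T / B) * Hfun (mval T (fun v => σ v ^ 2) B i)
            (mval T (fun v => σ v ^ 4) B i) (mval T (fun v => (α v)⁻¹) B i) := by
  obtain ⟨hc0, hcd, hdT, hdc⟩ := blockFacts hT hB hi
  set c := (i:ℝ) * T / B
  set d := ((i:ℝ)+1) * T / B
  set K := Hfun (mval T (fun v => σ v ^ 2) B i)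
      (mval T (fun v => σ v ^ 4) B i) (mval T (fun v => (α v)⁻¹) B i) with hK
  have hae : Fb T σ α B =ᵐ[volume.restrict (Set.Ioc c d)] (fun _ => K) := by
    refine (ae_restrict_iff' measurableSet_Ioc).2 ?_
    rw [ae_iff]
    refine measure_mono_null (t := {d}) ?_ Real.volume_singleton
    intro x hx
    rw [Set.mem_setOf_eq, Classical.not_imp] at hx
    by_contra hxd
    have hxd' : x ≠ d := by simpa using hxd
    have hxIoo : c < x ∧ x < d := ⟨hx.1.1, lt_of_le_of_ne hx.1.2 hxd'⟩
    exact hx.2 (by rw [Fb, floor_on_block hT hB hc0 hxIoo.1 hxIoo.2])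
  have hvol : volume (Set.Ioc c d) < ⊤ := measure_Ioc_lt_top
  have hint : IntegrableOn (Fb T σ α B) (Set.Ioc c d) volume :=
    (integrableOn_const hvol.ne).congr hae.symm
  refine ⟨(intervalIntegrable_iff_integrableOn_Ioc_of_le hcd.le).2 hint, ?_⟩
  rw [intervalIntegral.integral_of_le hcd.le, integral_congr_ae hae, setIntegral_const,
    Real.volume_real_Ioc_of_le hcd.le, smul_eq_mul, hdc]


end Stmt14Aux

open Stmt14Aux

/-- Convergence of the local QMLE asymptotic variance under stochastic sampling
times with intensity `α` (no-jump case): the limit is the efficiency bound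
`8a(∫₀^T α⁻¹)^{1/2}∫₀^T α^{1/2}σ³`. -/
theorem stmt14 (T a σlo σhi : ℝ) (hT : 0 < T) (ha : 0 < a)
    (hσlo : 0 < σlo) (hσ : σlo ≤ σhi) (σ α : ℝ → ℝ)
    (hrc : ∀ u ∈ Set.Ico (0 : ℝ) T, ContinuousWithinAt σ (Set.Ici u) u)
    (hll : ∀ u ∈ Set.Ioc (0 : ℝ) T,
      ∃ L : ℝ, Tendsto σ (nhdsWithin u (Set.Iio u)) (nhds L))
    (hfin : {u ∈ Set.Icc (0 : ℝ) T |
      ¬ ContinuousWithinAt σ (Set.Icc (0 : ℝ) T) u}.Finite)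
    (hbd : ∀ u ∈ Set.Icc (0 : ℝ) T, σlo ≤ σ u ∧ σ u ≤ σhi)
    (hα : ContinuousOn α (Set.Icc 0 T))
    (hαpos : ∀ u ∈ Set.Icc (0 : ℝ) T, 0 < α u) :
    Tendsto (fun B : ℕ => ∑ i ∈ Finset.range B,
        ((∫ s in (0:ℝ)..T, (α s)⁻¹) /
            (∫ s in ((i : ℝ) * T / B)..(((i : ℝ) + 1) * T / B), (α s)⁻¹)) ^ ((1 : ℝ) / 2) *
          (5 * a * (T / B) ^ ((1 : ℝ) / 2) *
              (∫ u in ((i : ℝ) * T / B)..(((i : ℝ) + 1) * T / B), σ u ^ 4) /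
              ((T / B)⁻¹ *
                ∫ u in ((i : ℝ) * T / B)..(((i : ℝ) + 1) * T / B), σ u ^ 2) ^ ((1 : ℝ) / 2)
            + 3 * a *
              ((T / B)⁻¹ *
                ∫ u in ((i : ℝ) * T / B)..(((i : ℝ) + 1) * T / B), σ u ^ 2) ^ ((3 : ℝ) / 2) *
              (T / B) ^ ((3 : ℝ) / 2)))
      atTop
      (nhds (8 * a * (∫ s in (0:ℝ)..T, (α s)⁻¹) ^ ((1 : ℝ) / 2) *
        ∫ s in (0:ℝ)..T, (α s) ^ ((1 : ℝ) / 2) * σ s ^ 3)) := by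
  classical
  -- α extrema on the compact interval
  obtain ⟨zhi, hzhi, hmax⟩ := isCompact_Icc.exists_isMaxOn (Set.nonempty_Icc.2 hT.le) hα
  obtain ⟨zlo, hzlo, hmin⟩ := isCompact_Icc.exists_isMinOn (Set.nonempty_Icc.2 hT.le) hα
  have hαhi0 : 0 < α zhi := hαpos _ hzhi
  have hαlo0 : 0 < α zlo := hαpos _ hzlo
  have hinvlb : ∀ u ∈ Set.Icc (0:ℝ) T, (α zhi)⁻¹ ≤ (α u)⁻¹ := fun u hu =>
    inv_anti₀ (hαpos u hu) (isMaxOn_iff.1 hmax u hu)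
  have hinvub : ∀ u ∈ Set.Icc (0:ℝ) T, (α u)⁻¹ ≤ (α zlo)⁻¹ := fun u hu =>
    inv_anti₀ hαlo0 (isMinOn_iff.1 hmin u hu)
  -- measurability of σ
  have hDnull : volume {u ∈ Set.Icc (0:ℝ) T | ¬ ContinuousWithinAt σ (Set.Icc (0:ℝ) T) u} = 0 :=
    hfin.measure_zero _
  have hσae : AEMeasurable σ (volume.restrict (Set.Icc (0:ℝ) T)) := by
    have h1 : ContinuousOn σ (Set.Icc (0:ℝ) T \
        {u ∈ Set.Icc (0:ℝ) T | ¬ ContinuousWithinAt σ (Set.Icc (0:ℝ) T) u}) := by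
      intro u hu
      have h2 : ContinuousWithinAt σ (Set.Icc (0:ℝ) T) u := by
        by_contra h
        exact hu.2 ⟨hu.1, h⟩
      exact h2.mono Set.diff_subset
    have h2 : AEMeasurable σ (volume.restrict (Set.Icc (0:ℝ) T \
        {u ∈ Set.Icc (0:ℝ) T | ¬ ContinuousWithinAt σ (Set.Icc (0:ℝ) T) u})) :=
      h1.aemeasurable (measurableSet_Icc.diff hfin.measurableSet)
    rwa [Measure.restrict_congr_set
      ((diff_ae_eq_self (μ := volume) (s := Set.Icc (0:ℝ) T)
        (t := {u ∈ Set.Icc (0:ℝ) T | ¬ ContinuousWithinAt σ (Set.Icc (0:ℝ) T) u})).2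
        (measure_mono_null Set.inter_subset_right hDnull))] at h2
  have hsub : ∀ c d : ℝ, 0 ≤ c → d ≤ T → Set.Ioc c d ⊆ Set.Icc (0:ℝ) T := fun c d hc hd x hx =>
    ⟨le_trans hc hx.1.le, hx.2.trans hd⟩
  have hmono : ∀ (f : ℝ → ℝ), AEMeasurable f (volume.restrict (Set.Icc (0:ℝ) T)) →
      ∀ c d : ℝ, 0 ≤ c → d ≤ T → AEStronglyMeasurable f (volume.restrict (Set.Ioc c d)) :=
    fun f hf c d hc hd =>
      (hf.mono_measure (Measure.restrict_mono (hsub c d hc hd) le_rfl)).aestronglyMeasurable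
  have hσ2ae : AEMeasurable (fun v => σ v ^ 2) (volume.restrict (Set.Icc (0:ℝ) T)) :=
    hσae.pow_const 2
  have hσ4ae : AEMeasurable (fun v => σ v ^ 4) (volume.restrict (Set.Icc (0:ℝ) T)) :=
    hσae.pow_const 4
  have hgae : AEMeasurable (fun v => (α v)⁻¹) (volume.restrict (Set.Icc (0:ℝ) T)) :=
    ((hα.inv₀ fun u hu => (hαpos u hu).ne').aemeasurable measurableSet_Icc)
  -- integral bounds over subintervals
  have key2 : ∀ c d : ℝ, 0 ≤ c → d ≤ T → c < d →
      IntervalIntegrable (fun v => σ v ^ 2) volume c d ∧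
        σlo^2 * (d - c) ≤ (∫ u in c..d, σ u ^ 2) ∧ (∫ u in c..d, σ u ^ 2) ≤ σhi^2 * (d - c) := by
    intro c d hc hd hcd
    refine avgBounds hcd (hmono _ hσ2ae c d hc hd) ?_ ?_
    · intro u hu; exact pow_le_pow_left₀ hσlo.le (hbd u (hsub c d hc hd hu)).1 2
    · intro u hu
      have h := hbd u (hsub c d hc hd hu)
      exact pow_le_pow_left₀ (hσlo.le.trans h.1) h.2 2
  have key4 : ∀ c d : ℝ, 0 ≤ c → d ≤ T → c < d →
      IntervalIntegrable (fun v => σ v ^ 4) volume c d ∧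
        σlo^4 * (d - c) ≤ (∫ u in c..d, σ u ^ 4) ∧ (∫ u in c..d, σ u ^ 4) ≤ σhi^4 * (d - c) := by
    intro c d hc hd hcd
    refine avgBounds hcd (hmono _ hσ4ae c d hc hd) ?_ ?_
    · intro u hu; exact pow_le_pow_left₀ hσlo.le (hbd u (hsub c d hc hd hu)).1 4
    · intro u hu
      have h := hbd u (hsub c d hc hd hu)
      exact pow_le_pow_left₀ (hσlo.le.trans h.1) h.2 4
  have keyg : ∀ c d : ℝ, 0 ≤ c → d ≤ T → c < d →
      IntervalIntegrable (fun v => (α v)⁻¹) volume c d ∧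
        (α zhi)⁻¹ * (d - c) ≤ (∫ u in c..d, (α u)⁻¹) ∧
          (∫ u in c..d, (α u)⁻¹) ≤ (α zlo)⁻¹ * (d - c) := by
    intro c d hc hd hcd
    refine avgBounds hcd (hmono _ hgae c d hc hd) ?_ ?_
    · intro u hu; exact hinvlb u (hsub c d hc hd hu)
    · intro u hu; exact hinvub u (hsub c d hc hd hu)
  have hI2 : ∀ c d : ℝ, 0 ≤ c → d ≤ T → c ≤ d →
      IntervalIntegrable (fun v => σ v ^ 2) volume c d := by
    intro c d hc hd hcd
    rcases eq_or_lt_of_le hcd with rfl | h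
    · exact IntervalIntegrable.refl
    · exact (key2 c d hc hd h).1
  have hI4 : ∀ c d : ℝ, 0 ≤ c → d ≤ T → c ≤ d →
      IntervalIntegrable (fun v => σ v ^ 4) volume c d := by
    intro c d hc hd hcd
    rcases eq_or_lt_of_le hcd with rfl | h
    · exact IntervalIntegrable.refl
    · exact (key4 c d hc hd h).1
  have hIg : ∀ c d : ℝ, 0 ≤ c → d ≤ T → c ≤ d →
      IntervalIntegrable (fun v => (α v)⁻¹) volume c d := by
    intro c d hc hd hcd
    rcases eq_or_lt_of_le hcd with rfl | h
    · exact IntervalIntegrable.refl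
    · exact (keyg c d hc hd h).1
  -- positivity of the total integral of α⁻¹
  have hA0 := keyg 0 T le_rfl le_rfl hT
  have hApos : 0 < ∫ s in (0:ℝ)..T, (α s)⁻¹ :=
    lt_of_lt_of_le (mul_pos (inv_pos.2 hαhi0) (by linarith) : (0:ℝ) < (α zhi)⁻¹ * (T - 0))
      hA0.2.1
  -- block average bounds
  have hm2 : ∀ B : ℕ, 1 ≤ B → ∀ i : ℕ, i < B →
      σlo^2 ≤ mval T (fun v => σ v ^ 2) B i ∧ mval T (fun v => σ v ^ 2) B i ≤ σhi^2 := by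
    intro B hB i hi
    obtain ⟨hc0, hcd, hdT, hdc⟩ := blockFacts hT hB hi
    have hΔ : 0 < T / (B:ℝ) := div_pos hT (by exact_mod_cast hB)
    have h := key2 _ _ hc0 hdT hcd
    have h1 := h.2.1; have h2 := h.2.2
    rw [hdc] at h1 h2
    simp only [mval]
    exact inv_mul_mem hΔ h1 h2
  have hm4 : ∀ B : ℕ, 1 ≤ B → ∀ i : ℕ, i < B →
      σlo^4 ≤ mval T (fun v => σ v ^ 4) B i ∧ mval T (fun v => σ v ^ 4) B i ≤ σhi^4 := by
    intro B hB i hi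
    obtain ⟨hc0, hcd, hdT, hdc⟩ := blockFacts hT hB hi
    have hΔ : 0 < T / (B:ℝ) := div_pos hT (by exact_mod_cast hB)
    have h := key4 _ _ hc0 hdT hcd
    have h1 := h.2.1; have h2 := h.2.2
    rw [hdc] at h1 h2
    simp only [mval]
    exact inv_mul_mem hΔ h1 h2
  have hmg : ∀ B : ℕ, 1 ≤ B → ∀ i : ℕ, i < B →
      (α zhi)⁻¹ ≤ mval T (fun v => (α v)⁻¹) B i ∧
        mval T (fun v => (α v)⁻¹) B i ≤ (α zlo)⁻¹ := by
    intro B hB i hi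
    obtain ⟨hc0, hcd, hdT, hdc⟩ := blockFacts hT hB hi
    have hΔ : 0 < T / (B:ℝ) := div_pos hT (by exact_mod_cast hB)
    have h := keyg _ _ hc0 hdT hcd
    have h1 := h.2.1; have h2 := h.2.2
    rw [hdc] at h1 h2
    simp only [mval]
    exact inv_mul_mem hΔ h1 h2
  -- a.e. facts on (0, T]
  have hIoo : ∀ᵐ u ∂(volume.restrict (Set.Ioc (0:ℝ) T)), u ∈ Set.Ioo (0:ℝ) T := by
    have h1 : ∀ᵐ u ∂(volume.restrict (Set.Ioc (0:ℝ) T)), u ∈ Set.Ioc (0:ℝ) T :=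
      ae_restrict_mem measurableSet_Ioc
    have h2 : (volume.restrict (Set.Ioc (0:ℝ) T)) {T} = 0 := by
      rw [Measure.restrict_apply' measurableSet_Ioc]
      exact measure_mono_null Set.inter_subset_left Real.volume_singleton
    have h3 : ∀ᵐ u ∂(volume.restrict (Set.Ioc (0:ℝ) T)), u ≠ T := by
      have he : {u : ℝ | ¬ u ≠ T} = {T} := by ext u; simp
      rw [ae_iff, he]; exact h2
    filter_upwards [h1, h3] with u hu hne
    exact ⟨hu.1, lt_of_le_of_ne hu.2 hne⟩
  have hCW : ∀ᵐ u ∂(volume.restrict (Set.Ioc (0:ℝ) T)),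
      ContinuousWithinAt σ (Set.Icc (0:ℝ) T) u := by
    rw [ae_iff, Measure.restrict_apply' measurableSet_Ioc]
    refine measure_mono_null ?_ hDnull
    intro x hx
    exact ⟨hsub 0 T le_rfl le_rfl hx.2, hx.1⟩
  -- pointwise limit
  have hlim : ∀ᵐ u ∂(volume.restrict (Set.Ioc (0:ℝ) T)),
      Tendsto (fun n => Fb T σ α n u) atTop
        (nhds (8 * ((α u) ^ ((1:ℝ)/2) * σ u ^ 3))) := by
    filter_upwards [hIoo, hCW] with u hu hcw
    have huI : u ∈ Set.Icc (0:ℝ) T := ⟨hu.1.le, hu.2.le⟩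
    have hσu : 0 < σ u := hσlo.trans_le (hbd u huI).1
    have hαu : 0 < α u := hαpos u huI
    have t2 := tendsto_avg hT hu.1 hu.2 hI2 (hcw.pow 2)
    have t4 := tendsto_avg hT hu.1 hu.2 hI4 (hcw.pow 4)
    have tg := tendsto_avg hT hu.1 hu.2 hIg ((hα u huI).inv₀ hαu.ne')
    have hx2 : (0:ℝ) < σ u ^ 2 := by positivity
    have hxr : ((σ u ^ 2 : ℝ)) ^ ((1:ℝ)/2) ≠ 0 := (Real.rpow_pos_of_pos hx2 _).ne'
    have hzr : (((α u)⁻¹ : ℝ)) ^ ((1:ℝ)/2) ≠ 0 :=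
      (Real.rpow_pos_of_pos (inv_pos.2 hαu) _).ne'
    have hcomb : Tendsto (fun n => Fb T σ α n u) atTop
        (nhds (Hfun (σ u ^ 2) (σ u ^ 4) ((α u)⁻¹))) := by
      simp only [Fb, mval, Hfun]
      exact Tendsto.div
        (Tendsto.add
          (Tendsto.div (t4.const_mul 5) (t2.rpow_const (Or.inl hx2.ne')) hxr)
          ((t2.rpow_const (Or.inl hx2.ne')).const_mul 3))
        (tg.rpow_const (Or.inl (inv_pos.2 hαu).ne'))
        hzr
    have hval : Hfun (σ u ^ 2) (σ u ^ 4) ((α u)⁻¹) = 8 * ((α u) ^ ((1:ℝ)/2) * σ u ^ 3) := by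
      have e1 : ((σ u ^ 2 : ℝ)) ^ ((1:ℝ)/2) = σ u := by
        rw [← Real.rpow_natCast (σ u) 2, ← Real.rpow_mul hσu.le,
          show ((2:ℕ):ℝ) * ((1:ℝ)/2) = 1 by norm_num, Real.rpow_one]
      have e2 : ((σ u ^ 2 : ℝ)) ^ ((3:ℝ)/2) = σ u ^ 3 := by
        rw [← Real.rpow_natCast (σ u) 2, ← Real.rpow_mul hσu.le,
          show ((2:ℕ):ℝ) * ((3:ℝ)/2) = ((3:ℕ):ℝ) by norm_num, Real.rpow_natCast]
      have e3 : (((α u)⁻¹ : ℝ)) ^ ((1:ℝ)/2) = ((α u) ^ ((1:ℝ)/2))⁻¹ := Real.inv_rpow hαu.le _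
      have h4 : (α u) ^ ((1:ℝ)/2) ≠ 0 := (Real.rpow_pos_of_pos hαu _).ne'
      unfold Hfun
      rw [e1, e2, e3]
      field_simp
      ring
    rw [hval] at hcomb; exact hcomb
  -- uniform bound
  have hbound : ∀ n : ℕ, ∀ᵐ u ∂(volume.restrict (Set.Ioc (0:ℝ) T)), ‖Fb T σ α n u‖ ≤
      (5 * σhi^4 / (σlo^2) ^ ((1:ℝ)/2) + 3 * (σhi^2) ^ ((3:ℝ)/2)) / ((α zhi)⁻¹) ^ ((1:ℝ)/2) := by
    have hM0 : 0 ≤ (5 * σhi^4 / (σlo^2) ^ ((1:ℝ)/2) + 3 * (σhi^2) ^ ((3:ℝ)/2)) /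
        ((α zhi)⁻¹) ^ ((1:ℝ)/2) :=
      div_nonneg (by positivity) (Real.rpow_nonneg (inv_pos.2 hαhi0).le _)
    intro n
    rcases Nat.eq_zero_or_pos n with rfl | hn
    · refine Filter.Eventually.of_forall fun u => ?_
      have hz : Fb T σ α 0 u = 0 := by
        simp [Fb, mval, Hfun, Real.zero_rpow]
      rw [hz]; simpa using hM0
    · filter_upwards [hIoo] with u hu
      have hBpos : (0:ℝ) < n := by exact_mod_cast hn
      have hidx : ⌊u * (n:ℝ) / T⌋₊ < n := by
        rw [Nat.floor_lt (div_nonneg (mul_nonneg hu.1.le (Nat.cast_nonneg n)) hT.le),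
          div_lt_iff₀ hT]
        nlinarith [hu.1, hu.2]
      obtain ⟨h2a, h2b⟩ := hm2 n hn _ hidx
      obtain ⟨h4a, h4b⟩ := hm4 n hn _ hidx
      obtain ⟨hga, hgb⟩ := hmg n hn _ hidx
      have hq : 0 ≤ Fb T σ α n u := by
        simp only [Fb]
        exact Hfun_nonneg (le_trans (by positivity) h2a) (le_trans (by positivity) h4a)
          (le_trans (inv_pos.2 hαhi0).le hga)
      rw [Real.norm_eq_abs, abs_of_nonneg hq]
      simp only [Fb]
      exact Hfun_le (pow_pos hσlo 2) (inv_pos.2 hαhi0) h2a h2b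
        (le_trans (by positivity) h4a) h4b hga
  -- dominated convergence
  have hDCT := tendsto_integral_of_dominated_convergence
    (μ := volume.restrict (Set.Ioc (0:ℝ) T))
    (F := fun n => Fb T σ α n) (f := fun u => 8 * ((α u) ^ ((1:ℝ)/2) * σ u ^ 3))
    (fun _ => (5 * σhi^4 / (σlo^2) ^ ((1:ℝ)/2) + 3 * (σhi^2) ^ ((3:ℝ)/2)) /
        ((α zhi)⁻¹) ^ ((1:ℝ)/2))
    (fun n => (measurable_Fb T σ α n).aestronglyMeasurable)
    (integrableOn_const measure_Ioc_lt_top.ne) hbound hlim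
  -- sum representation of the integral of the step function
  have hrep : ∀ B : ℕ, 1 ≤ B → (∫ u in Set.Ioc (0:ℝ) T, Fb T σ α B u) =
      ∑ i ∈ Finset.range B, (T / (B:ℝ)) * Hfun (mval T (fun v => σ v ^ 2) B i)
        (mval T (fun v => σ v ^ 4) B i) (mval T (fun v => (α v)⁻¹) B i) := by
    intro B hB
    have hBpos : (0:ℝ) < B := by exact_mod_cast hB
    have hadj : ∀ k < B, IntervalIntegrable (Fb T σ α B) volume
        ((fun k : ℕ => (k:ℝ) * T / B) k) ((fun k : ℕ => (k:ℝ) * T / B) (k+1)) := by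
      intro k hk
      have h := (Fb_block_integral hT σ α hB hk).1
      have hc : (((k+1:ℕ)):ℝ) * T / B = ((k:ℝ)+1) * T / B := by push_cast; ring
      simpa [hc] using h
    have hsum := intervalIntegral.sum_integral_adjacent_intervals (μ := volume) hadj
    rw [← intervalIntegral.integral_of_le hT.le]
    have h0 : ((0:ℕ):ℝ) * T / B = 0 := by simp
    have hN : ((B:ℕ):ℝ) * T / B = T := by field_simp
    rw [show (∫ u in (0:ℝ)..T, Fb T σ α B u)
        = ∫ u in (((0:ℕ):ℝ) * T / B)..(((B:ℕ):ℝ) * T / B), Fb T σ α B u from by rw [h0, hN]]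
    rw [← hsum]
    refine Finset.sum_congr rfl fun i hi => ?_
    have h := (Fb_block_integral hT σ α hB (Finset.mem_range.1 hi)).2
    have hc : (((i+1:ℕ)):ℝ) * T / B = ((i:ℝ)+1) * T / B := by push_cast; ring
    rw [hc]
    exact h
  -- identification of the summands
  have hfinal : ∀ B : ℕ, 1 ≤ B → ∀ i : ℕ, i < B →
      ((∫ s in (0:ℝ)..T, (α s)⁻¹) /
            (∫ s in ((i : ℝ) * T / B)..(((i : ℝ) + 1) * T / B), (α s)⁻¹)) ^ ((1 : ℝ) / 2) *
          (5 * a * (T / B) ^ ((1 : ℝ) / 2) *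
              (∫ u in ((i : ℝ) * T / B)..(((i : ℝ) + 1) * T / B), σ u ^ 4) /
              ((T / B)⁻¹ *
                ∫ u in ((i : ℝ) * T / B)..(((i : ℝ) + 1) * T / B), σ u ^ 2) ^ ((1 : ℝ) / 2)
            + 3 * a *
              ((T / B)⁻¹ *
                ∫ u in ((i : ℝ) * T / B)..(((i : ℝ) + 1) * T / B), σ u ^ 2) ^ ((3 : ℝ) / 2) *
              (T / B) ^ ((3 : ℝ) / 2))
        = a * (∫ s in (0:ℝ)..T, (α s)⁻¹) ^ ((1:ℝ)/2) *
          ((T / (B:ℝ)) * Hfun (mval T (fun v => σ v ^ 2) B i)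
            (mval T (fun v => σ v ^ 4) B i) (mval T (fun v => (α v)⁻¹) B i)) := by
    intro B hB i hi
    obtain ⟨hc0, hcd, hdT, hdc⟩ := blockFacts hT hB hi
    have hΔ : 0 < T / (B:ℝ) := div_pos hT (by exact_mod_cast hB)
    have hΔ' : 0 < ((i:ℝ)+1) * T / B - (i:ℝ) * T / B := by rw [hdc]; exact hΔ
    have hS2 : 0 < ∫ u in ((i:ℝ) * T / B)..(((i:ℝ)+1) * T / B), σ u ^ 2 :=
      lt_of_lt_of_le (mul_pos (pow_pos hσlo 2) hΔ') (key2 _ _ hc0 hdT hcd).2.1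
    have hS4 : 0 ≤ ∫ u in ((i:ℝ) * T / B)..(((i:ℝ)+1) * T / B), σ u ^ 4 :=
      le_trans (mul_pos (pow_pos hσlo 4) hΔ').le (key4 _ _ hc0 hdT hcd).2.1
    have hG : 0 < ∫ u in ((i:ℝ) * T / B)..(((i:ℝ)+1) * T / B), (α u)⁻¹ :=
      lt_of_lt_of_le (mul_pos (inv_pos.2 hαhi0) hΔ') (keyg _ _ hc0 hdT hcd).2.1
    simp only [mval]
    exact summand_eq hApos hΔ hS2 hS4 hG
  -- assemble
  have hT1 : Tendsto (fun B : ℕ => a * (∫ s in (0:ℝ)..T, (α s)⁻¹) ^ ((1:ℝ)/2) *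
      ∫ u in Set.Ioc (0:ℝ) T, Fb T σ α B u) atTop
      (nhds (a * (∫ s in (0:ℝ)..T, (α s)⁻¹) ^ ((1:ℝ)/2) *
        ∫ u in Set.Ioc (0:ℝ) T, 8 * ((α u) ^ ((1:ℝ)/2) * σ u ^ 3))) :=
    hDCT.const_mul _
  have hint8 : (∫ u in Set.Ioc (0:ℝ) T, 8 * ((α u) ^ ((1:ℝ)/2) * σ u ^ 3))
      = 8 * ∫ s in (0:ℝ)..T, (α s) ^ ((1:ℝ)/2) * σ s ^ 3 := by
    rw [← intervalIntegral.integral_of_le hT.le, intervalIntegral.integral_const_mul]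
  rw [hint8] at hT1
  have hT2 : Tendsto (fun B : ℕ => a * (∫ s in (0:ℝ)..T, (α s)⁻¹) ^ ((1:ℝ)/2) *
      ∫ u in Set.Ioc (0:ℝ) T, Fb T σ α B u) atTop
      (nhds (8 * a * (∫ s in (0:ℝ)..T, (α s)⁻¹) ^ ((1 : ℝ) / 2) *
        ∫ s in (0:ℝ)..T, (α s) ^ ((1 : ℝ) / 2) * σ s ^ 3)) := by
    convert hT1 using 2
    ring
  refine hT2.congr' ?_
  filter_upwards [eventually_ge_atTop 1] with B hB
  rw [hrep B hB, Finset.mul_sum]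
  exact Finset.sum_congr rfl fun i hi => (hfinal B hB i (Finset.mem_range.1 hi)).symm
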